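/- Suppose d is even and exactly two of η(e0), η(e1), η(e2) equal -1 while the third equals 1. Then the number of points (x0 : x1 : x2) ∈ ℙ²(F_q) with C(x0, x1, x2) = 0 equals (3q² - 6q + 43)/8; equivalently, writing n = (q-5)/2 for the degree of the nonlinear part of C, it equals n(n + q - 1)/2 + (2q + 1). -/

import Mathlib

open MvPolynomial

/-- The polynomial `C = X0^d + X1^d + X2^d + (e0·X0 + e1·X1 + e2·X2)^d` over `F_q`. -/
noncomputable def fermatSlice (F : Type) [Field F] (d : ℕ) (e0 e1 e2 : F) :
    MvPolynomial (Fin 3) F :=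
  X 0 ^ d + X 1 ^ d + X 2 ^ d +
    (MvPolynomial.C e0 * X 0 + MvPolynomial.C e1 * X 1 + MvPolynomial.C e2 * X 2) ^ d

/-!
Since `a ^ d = η(a)` and `p > 3`, a point lies on `C = 0` exactly when the integer
`η(x₀) + η(x₁) + η(x₂) + η(e₀x₀ + e₁x₁ + e₂x₂)` vanishes. Rescaling `xᵢ ↦ eᵢxᵢ` and permuting
the coordinates turns the affine count into the number `T` of `(a, b, c)` with
`η(a) + η(b) = η(c) + η(a + b + c)`. As `d` is even, `η(-1) = 1`, and the substitution
`(a, b, c) = (-z, w + z, z')` gives `T = ∑_w #{(z, z') | f_w(z) = f_w(z')}` for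
`f_w(z) = η(z) + η(w + z)`: a sum of squares of fibre sizes of `f_w`. For `w ≠ 0` these fibre
sizes are determined by the moments `∑ f_w = 0`, `∑ f_w² = 2q - 4` (a Jacobi sum) and the fact
that `f_w` is odd only at `z = 0, -w`. This yields `8T = (q - 1)(3q² - 6q + 43) + 8`, and the
projective count is `(T - 1)/(q - 1)`.
-/

open Finset
open scoped LinearAlgebra.Projectivization

section Fibres

variable {α β : Type*} [Fintype α] [DecidableEq β] (f : α → β) {t : Finset β}

theorem sum_comp_eq_sum_card_fiber_nsmul {M : Type*} [AddCommMonoid M] (hf : ∀ a, f a ∈ t)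
    (g : β → M) : ∑ a, g (f a) = ∑ b ∈ t, #{a | f a = b} • g b := by
  rw [← sum_fiberwise_of_maps_to (fun a _ => hf a)]
  refine sum_congr rfl fun b _ => ?_
  rw [sum_congr rfl fun a ha => by rw [(mem_filter.1 ha).2], sum_const]

theorem card_filter_comp_eq_comp_eq_sum_sq (hf : ∀ a, f a ∈ t) :
    #{p : α × α | f p.1 = f p.2} = ∑ b ∈ t, #{a | f a = b} ^ 2 := by
  calc #{p : α × α | f p.1 = f p.2} = ∑ a, #{a' | f a' = f a} := by
        simp only [card_filter, Fintype.sum_prod_type, eq_comm]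
    _ = ∑ b ∈ t, #{a | f a = b} ^ 2 := by
        simp only [sum_comp_eq_sum_card_fiber_nsmul f hf (fun b => #{a' | f a' = b}),
          smul_eq_mul, sq]

end Fibres

theorem intCast_eq_zero_iff_of_abs_lt_ringChar {R : Type*} [Ring R] {n : ℤ}
    (hn : |n| < ringChar R) : (n : R) = 0 ↔ n = 0 :=
  ⟨fun h => Int.eq_zero_of_abs_lt_dvd ((CharP.intCast_eq_zero_iff R _ n).1 h) hn,
    fun h => by rw [h, Int.cast_zero]⟩

theorem Projectivization.card_nonzero_mem_eq_card_rep_mem_mul {k V : Type*} [DivisionRing k]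
    [AddCommGroup V] [Module k V] {S : Set V} (hS : ∀ (a : kˣ) (v : V), a • v ∈ S ↔ v ∈ S) :
    Nat.card {v : V // v ≠ 0 ∧ v ∈ S} = Nat.card {P : ℙ k V // P.rep ∈ S} * Nat.card kˣ := by
  let e := nonZeroEquivProjectivizationProdUnits k V
  have he : ∀ v : {v : V // v ≠ 0}, v.1 ∈ S ↔ (e v).1.rep ∈ S := fun v => by
    obtain ⟨a, ha⟩ := exists_smul_eq_mk_rep k v.1 v.2
    rw [show (e v).1 = mk k v.1 v.2 from rfl, ← ha, hS]
  calc Nat.card {v : V // v ≠ 0 ∧ v ∈ S}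
      = Nat.card {v : {v : V // v ≠ 0} // v.1 ∈ S} :=
        Nat.card_congr (Equiv.subtypeSubtypeEquivSubtypeInter _ _).symm
    _ = Nat.card {x : ℙ k V × kˣ // x.1.rep ∈ S} := Nat.card_congr (e.subtypeEquiv he)
    _ = Nat.card {P : ℙ k V // P.rep ∈ S} * Nat.card kˣ :=
        (Nat.card_congr (Equiv.prodSubtypeFstEquivSubtypeProd
          (p := fun P : ℙ k V => P.rep ∈ S))).trans (Nat.card_prod _ _)

section QuadraticChar

variable {F : Type*} [Field F] [Fintype F] [DecidableEq F]

local notation "χ" => quadraticChar F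

theorem quadraticChar_trichotomy (a : F) : χ a = 0 ∨ χ a = 1 ∨ χ a = -1 := by
  rcases eq_or_ne a 0 with rfl | ha
  · exact Or.inl quadraticChar_zero
  · exact Or.inr (quadraticChar_dichotomy ha)

theorem abs_quadraticChar_le_one (a : F) : |χ a| ≤ 1 := by
  rcases quadraticChar_trichotomy a with h | h | h <;> simp [h, -quadraticChar_apply]

theorem quadraticChar_eq_of_pow_eq (hF : 2 < ringChar F) {a : F} {σ : ℤ} (hσ : |σ| ≤ 1)
    (ha : a ^ (Fintype.card F / 2) = σ) : χ a = σ := by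
  have hχ := abs_quadraticChar_le_one a
  rw [← sub_eq_zero, ← intCast_eq_zero_iff_of_abs_lt_ringChar (R := F), Int.cast_sub,
    quadraticChar_eq_pow_of_char_ne_two' hF.ne' a, ha, sub_self]
  calc |χ a - σ| ≤ |χ a| + |σ| := abs_sub _ _
    _ < ringChar F := by omega

theorem quadraticChar_neg (hneg : χ (-1) = 1) (a : F) : χ (-a) = χ a := by
  rw [neg_eq_neg_one_mul, map_mul, hneg, one_mul]

theorem sum_quadraticChar_add_left (hF : ringChar F ≠ 2) (w : F) : ∑ z, χ (w + z) = 0 :=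
  (Equiv.sum_comp (Equiv.addLeft w) _).trans (quadraticChar_sum_zero hF)

theorem sum_quadraticChar_sq : ∑ z, χ z ^ 2 = Fintype.card F - 1 := by
  rw [← sum_erase_add _ _ (mem_univ 0),
    sum_congr rfl fun z hz => quadraticChar_sq_one (ne_of_mem_erase hz), sum_const,
    card_erase_of_mem (mem_univ 0), card_univ]
  simp [Nat.cast_sub Fintype.card_pos]

theorem sum_quadraticChar_mul_quadraticChar_add (hF : ringChar F ≠ 2) {w : F} (hw : w ≠ 0) :
    ∑ z, χ z * χ (w + z) = -1 := by
  have hJ : jacobiSum χ χ = -χ (-1) := by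
    simpa [(quadraticChar_isQuadratic F).inv] using
      jacobiSum_nontrivial_inv (quadraticChar_ne_one hF)
  -- substitute `z = -w x`; the factor `χ(w)²` is `1`
  have hsub : ∀ x, χ (-w * x) * χ (w + -w * x) = χ (-1) * (χ x * χ (1 - x)) := fun x => by
    rw [show w + -w * x = w * (1 - x) by ring, show -w * x = -1 * w * x by ring]
    simp only [map_mul]
    linear_combination (χ (-1) * χ x * χ (1 - x)) * quadraticChar_sq_one hw
  rw [← Equiv.sum_comp (Equiv.mulLeft₀ (-w) (neg_ne_zero.2 hw))]
  simp only [Equiv.mulLeft₀_apply, hsub, ← mul_sum]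
  rw [← jacobiSum, hJ, mul_neg, ← sq, quadraticChar_sq_one (neg_ne_zero.2 one_ne_zero)]

def shiftedCharSum (w z : F) : ℤ := χ z + χ (w + z)

theorem shiftedCharSum_mem (w z : F) : shiftedCharSum w z ∈ ({-2, -1, 0, 1, 2} : Finset ℤ) := by
  rcases quadraticChar_trichotomy z with h | h | h <;>
    rcases quadraticChar_trichotomy (w + z) with h' | h' | h' <;> simp [shiftedCharSum, h, h']

theorem sum_shiftedCharSum (hF : ringChar F ≠ 2) (w : F) : ∑ z, shiftedCharSum w z = 0 := by
  simp only [shiftedCharSum, sum_add_distrib, quadraticChar_sum_zero hF,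
    sum_quadraticChar_add_left hF, add_zero]

theorem sum_shiftedCharSum_sq (hF : ringChar F ≠ 2) {w : F} (hw : w ≠ 0) :
    ∑ z, shiftedCharSum w z ^ 2 = 2 * Fintype.card F - 4 := by
  have hshift : ∑ z, χ (w + z) ^ 2 = Fintype.card F - 1 :=
    (Equiv.sum_comp (Equiv.addLeft w) (fun z => χ z ^ 2)).trans sum_quadraticChar_sq
  simp only [shiftedCharSum, add_sq, sum_add_distrib, mul_assoc, ← mul_sum,
    sum_quadraticChar_sq, hshift, sum_quadraticChar_mul_quadraticChar_add hF hw]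
  ring

theorem filter_shiftedCharSum_eq_odd (hneg : χ (-1) = 1) {w : F} (hw : w ≠ 0) {σ : ℤ}
    (hσ : σ = 1 ∨ σ = -1) :
    ({z | shiftedCharSum w z = σ} : Finset F) = if χ w = σ then {0, -w} else ∅ := by
  have hχneg := quadraticChar_neg hneg w
  ext z
  rw [mem_filter, shiftedCharSum]
  rcases eq_or_ne z 0 with rfl | hz
  · split_ifs <;> simp [*, quadraticChar_zero, -quadraticChar_apply]
  rcases eq_or_ne z (-w) with rfl | hzw
  · split_ifs <;> simp [*, quadraticChar_zero, -quadraticChar_apply]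
  have hwz : w + z ≠ 0 := fun h => hzw (eq_neg_of_add_eq_zero_right h)
  have : χ z + χ (w + z) ≠ σ := by
    rcases quadraticChar_dichotomy hz with h | h <;>
      rcases quadraticChar_dichotomy hwz with h' | h' <;> rcases hσ with rfl | rfl <;> simp [h, h']
  split_ifs <;> simp [*, -quadraticChar_apply]

theorem eight_mul_card_shiftedCharSum_eq_of_ne_zero (hF : ringChar F ≠ 2) (hneg : χ (-1) = 1)
    {w : F} (hw : w ≠ 0) :
    8 * (#{p : F × F | shiftedCharSum w p.1 = shiftedCharSum w p.2} : ℤ) =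
      3 * (Fintype.card F : ℤ) ^ 2 - 10 * Fintype.card F + 47 := by
  set f := shiftedCharSum w
  have hf : ∀ z, f z ∈ ({-2, -1, 0, 1, 2} : Finset ℤ) := shiftedCharSum_mem w
  set c : ℤ → ℤ := fun k => (#{z | f z = k} : ℤ)
  have hmoment : ∀ g : ℤ → ℤ, ∑ z, g (f z) =
      c (-2) * g (-2) + c (-1) * g (-1) + c 0 * g 0 + c 1 * g 1 + c 2 * g 2 := fun g => by
    rw [sum_comp_eq_sum_card_fiber_nsmul f hf]
    simp [c, add_assoc]
  have hpairs : (#{p : F × F | f p.1 = f p.2} : ℤ) =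
      c (-2) ^ 2 + c (-1) ^ 2 + c 0 ^ 2 + c 1 ^ 2 + c 2 ^ 2 := by
    rw [card_filter_comp_eq_comp_eq_sum_sq f hf]
    simp [c, add_assoc]
  have hodd : ∀ σ : ℤ, σ = 1 ∨ σ = -1 → c σ = if χ w = σ then 2 else 0 := fun σ hσ => by
    rw [show c σ = #{z | shiftedCharSum w z = σ} from rfl,
      filter_shiftedCharSum_eq_odd hneg hw hσ]
    split_ifs
    · rw [card_pair (neg_ne_zero.2 hw).symm, Nat.cast_ofNat]
    · rfl
  have hodd' : c 1 + c (-1) = 2 ∧ (c 1 - c (-1)) ^ 2 = 4 := by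
    rcases quadraticChar_dichotomy hw with hχ | hχ <;>
      simp [hodd 1 (Or.inl rfl), hodd (-1) (Or.inr rfl), hχ]
  have h0 := hmoment fun _ => 1
  have h1 := hmoment id
  have h2 := hmoment (· ^ 2)
  simp only [f, sum_shiftedCharSum hF, sum_shiftedCharSum_sq hF hw, sum_const, card_univ,
    nsmul_eq_mul, mul_one, id] at h0 h1 h2
  have hs : 2 * (c 2 + c (-2)) = Fintype.card F - 3 := by linarith
  have hδ : 2 * (c 2 - c (-2)) = c (-1) - c 1 := by linarith
  have hm : 2 * c 0 = Fintype.card F - 1 := by linarith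
  rw [hpairs]
  -- `8 ∑ c k ^ 2` in terms of the known `c 2 ± c (-2)`, `c 0` and `c 1 ± c (-1)`
  linear_combination (2 * (c 2 + c (-2)) + Fintype.card F - 3) * hs +
    (2 * (c 2 - c (-2)) + c (-1) - c 1) * hδ + 2 * (2 * c 0 + Fintype.card F - 1) * hm +
    4 * (c 1 + c (-1) + 2) * hodd'.1 + 5 * hodd'.2

theorem eight_mul_card_shiftedCharSum_zero_eq (hF : ringChar F ≠ 2) :
    8 * (#{p : F × F | shiftedCharSum 0 p.1 = shiftedCharSum 0 p.2} : ℤ) =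
      4 * (Fintype.card F - 1 : ℤ) ^ 2 + 8 := by
  have hf : ∀ z : F, χ z ∈ ({-1, 0, 1} : Finset ℤ) := fun z => by
    rcases quadraticChar_trichotomy z with h | h | h <;> simp [h, -quadraticChar_apply]
  set c : ℤ → ℤ := fun k => (#{z | χ z = k} : ℤ)
  have hmoment : ∀ g : ℤ → ℤ, ∑ z, g (χ z) = c (-1) * g (-1) + c 0 * g 0 + c 1 * g 1 :=
    fun g => by
      rw [sum_comp_eq_sum_card_fiber_nsmul _ hf]
      simp [c, add_assoc]
  have hpairs : (#{p : F × F | χ p.1 = χ p.2} : ℤ) = c (-1) ^ 2 + c 0 ^ 2 + c 1 ^ 2 := by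
    rw [card_filter_comp_eq_comp_eq_sum_sq _ hf]
    simp [c, add_assoc]
  have hc0 : c 0 = 1 := by
    simp only [c, quadraticChar_eq_zero_iff, filter_eq', mem_univ, if_true, card_singleton,
      Nat.cast_one]
  have h0 := hmoment fun _ => 1
  have h1 := hmoment id
  simp only [quadraticChar_sum_zero hF, sum_const, card_univ, nsmul_eq_mul, mul_one, id] at h0 h1
  have hc1 : 2 * c 1 = Fintype.card F - 1 := by linarith
  have hcm1 : c (-1) = c 1 := by linarith
  rw [filter_congr fun p _ => by rw [shiftedCharSum, shiftedCharSum, zero_add, zero_add,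
    ← two_mul, ← two_mul, mul_right_inj' two_ne_zero], hpairs, hcm1, hc0]
  linear_combination 4 * (2 * c 1 + Fintype.card F - 1) * hc1

theorem eight_mul_card_quadraticChar_balanced (hF : ringChar F ≠ 2) (hneg : χ (-1) = 1) :
    8 * (#{t : F × F × F | χ t.1 + χ t.2.1 = χ t.2.2 + χ (t.1 + t.2.1 + t.2.2)} : ℤ) =
      (Fintype.card F - 1 : ℤ) * (3 * (Fintype.card F : ℤ) ^ 2 - 6 * Fintype.card F + 43) + 8 := by
  have hsubst : #{t : F × F × F | χ t.1 + χ t.2.1 = χ t.2.2 + χ (t.1 + t.2.1 + t.2.2)} =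
      #{u : F × F × F | χ u.2.1 + χ (u.1 + u.2.1) = χ u.2.2 + χ (u.1 + u.2.2)} := by
    refine card_nbij' (fun t => (t.1 + t.2.1, -t.1, t.2.2)) (fun u => (-u.2.1, u.1 + u.2.1, u.2.2))
      (fun t ht => ?_) (fun u hu => ?_) (fun t _ => by simp) (fun u _ => by simp)
    · simp only [coe_filter, mem_univ, true_and, Set.mem_ofPred_eq] at ht ⊢
      rwa [quadraticChar_neg hneg, add_neg_cancel_comm]
    · simp only [coe_filter, mem_univ, true_and, Set.mem_ofPred_eq] at hu ⊢
      rwa [quadraticChar_neg hneg, neg_add_cancel_comm_assoc]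
  have hfibre : #{u : F × F × F | χ u.2.1 + χ (u.1 + u.2.1) = χ u.2.2 + χ (u.1 + u.2.2)} =
      ∑ w, #{p : F × F | shiftedCharSum w p.1 = shiftedCharSum w p.2} := by
    simp only [card_filter]
    rw [Fintype.sum_prod_type]
    rfl
  rw [hsubst, hfibre, Nat.cast_sum, mul_sum, ← add_sum_erase _ _ (mem_univ 0),
    eight_mul_card_shiftedCharSum_zero_eq hF, sum_congr rfl fun w hw =>
      eight_mul_card_shiftedCharSum_eq_of_ne_zero hF hneg (ne_of_mem_erase hw),
    sum_const, card_erase_of_mem (mem_univ 0), card_univ, nsmul_eq_mul,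
    Nat.cast_sub Fintype.card_pos]
  ring

def fermatCharSum (e0 e1 e2 : F) (t : F × F × F) : ℤ :=
  χ t.1 + χ t.2.1 + χ t.2.2 + χ (e0 * t.1 + e1 * t.2.1 + e2 * t.2.2)

theorem card_fermatCharSum_eq_zero_swap (e0 e1 e2 : F) :
    #{t | fermatCharSum e0 e1 e2 t = 0} = #{t | fermatCharSum e0 e2 e1 t = 0} :=
  card_equiv ((Equiv.refl F).prodCongr (Equiv.prodComm F F)) fun t => by
    simp only [mem_filter, mem_univ, true_and]
    simp only [fermatCharSum, Equiv.prodCongr_apply, Equiv.coe_refl, Equiv.prodComm_apply,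
      Prod.map_fst, Prod.map_snd, id, Prod.fst_swap, Prod.snd_swap]
    rw [add_right_comm (χ t.1), add_right_comm (e0 * t.1)]

theorem card_fermatCharSum_eq_zero_rotate (e0 e1 e2 : F) :
    #{t | fermatCharSum e0 e1 e2 t = 0} = #{t | fermatCharSum e1 e2 e0 t = 0} :=
  card_equiv ((Equiv.prodComm F (F × F)).trans (Equiv.prodAssoc F F F)) fun t => by
    simp only [mem_filter, mem_univ, true_and]
    simp only [fermatCharSum, Equiv.trans_apply, Equiv.prodComm_apply, Equiv.prodAssoc_apply,
      Prod.fst_swap, Prod.snd_swap]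
    ring_nf

theorem card_fermatCharSum_eq_zero_of_quadraticChar {e0 e1 e2 : F} (h0 : χ e0 = -1)
    (h1 : χ e1 = -1) (h2 : χ e2 = 1) :
    #{t | fermatCharSum e0 e1 e2 t = 0} =
      #{t : F × F × F | χ t.1 + χ t.2.1 = χ t.2.2 + χ (t.1 + t.2.1 + t.2.2)} := by
  have hne : ∀ {e : F}, χ e ≠ 0 → e ≠ 0 := fun h he => h (he ▸ quadraticChar_zero)
  refine card_equiv ((Equiv.mulLeft₀ e0 (hne (by simp [h0]))).prodCongr
    ((Equiv.mulLeft₀ e1 (hne (by simp [h1]))).prodCongr (Equiv.mulLeft₀ e2 (hne (by simp [h2])))))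
    fun t => ?_
  simp only [mem_filter, mem_univ, true_and]
  simp only [fermatCharSum, Equiv.prodCongr_apply, Prod.map_fst, Prod.map_snd,
    Equiv.mulLeft₀_apply, map_mul, h0, h1, h2]
  omega

theorem eight_mul_card_fermatCharSum_eq_zero (hF : ringChar F ≠ 2) (hneg : χ (-1) = 1)
    {e0 e1 e2 : F}
    (hcase : (χ e0 = -1 ∧ χ e1 = -1 ∧ χ e2 = 1) ∨ (χ e0 = -1 ∧ χ e1 = 1 ∧ χ e2 = -1) ∨
      (χ e0 = 1 ∧ χ e1 = -1 ∧ χ e2 = -1)) :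
    8 * (#{t | fermatCharSum e0 e1 e2 t = 0} : ℤ) =
      (Fintype.card F - 1 : ℤ) * (3 * (Fintype.card F : ℤ) ^ 2 - 6 * Fintype.card F + 43) + 8 := by
  rw [← eight_mul_card_quadraticChar_balanced hF hneg]
  rcases hcase with ⟨h0, h1, h2⟩ | ⟨h0, h1, h2⟩ | ⟨h0, h1, h2⟩
  · rw [card_fermatCharSum_eq_zero_of_quadraticChar h0 h1 h2]
  · rw [card_fermatCharSum_eq_zero_swap, card_fermatCharSum_eq_zero_of_quadraticChar h0 h2 h1]
  · rw [card_fermatCharSum_eq_zero_rotate, card_fermatCharSum_eq_zero_of_quadraticChar h1 h2 h0]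

end QuadraticChar

section FermatSlice

variable {F : Type} [Field F] {d : ℕ} {e0 e1 e2 : F}

theorem eval_fermatSlice (x : Fin 3 → F) :
    eval x (fermatSlice F d e0 e1 e2) =
      x 0 ^ d + x 1 ^ d + x 2 ^ d + (e0 * x 0 + e1 * x 1 + e2 * x 2) ^ d := by
  simp [fermatSlice]

theorem eval_smul_fermatSlice (c : F) (x : Fin 3 → F) :
    eval (c • x) (fermatSlice F d e0 e1 e2) = c ^ d * eval x (fermatSlice F d e0 e1 e2) := by
  simp only [eval_fermatSlice, Pi.smul_apply, smul_eq_mul]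
  rw [show e0 * (c * x 0) + e1 * (c * x 1) + e2 * (c * x 2) = c * (e0 * x 0 + e1 * x 1 + e2 * x 2)
    by ring]
  simp only [mul_pow]
  ring

variable [Fintype F] [DecidableEq F]

/-- Each `a ^ d` is the sign `χ a`, and a sum of four signs vanishes in `F` only if it vanishes
in `ℤ`. -/
theorem eval_fermatSlice_eq_zero_iff (hF : 4 < ringChar F) (hd : Fintype.card F / 2 = d)
    (x : Fin 3 → F) :
    eval x (fermatSlice F d e0 e1 e2) = 0 ↔ fermatCharSum e0 e1 e2 (x 0, x 1, x 2) = 0 := by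
  have hpow : ∀ a : F, a ^ d = (quadraticChar F a : F) := fun a => by
    rw [← hd, quadraticChar_eq_pow_of_char_ne_two' (by omega)]
  have hχ : ∀ a : F, -1 ≤ quadraticChar F a ∧ quadraticChar F a ≤ 1 := fun a =>
    abs_le.1 (abs_quadraticChar_le_one a)
  have hF' : (4 : ℤ) < ringChar F := by exact_mod_cast hF
  rw [eval_fermatSlice, hpow, hpow, hpow, hpow, fermatCharSum]
  exact_mod_cast intCast_eq_zero_iff_of_abs_lt_ringChar (abs_lt.2
    ⟨by linarith [hχ (x 0), hχ (x 1), hχ (x 2), hχ (e0 * x 0 + e1 * x 1 + e2 * x 2)],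
      by linarith [hχ (x 0), hχ (x 1), hχ (x 2), hχ (e0 * x 0 + e1 * x 1 + e2 * x 2)]⟩)

theorem card_fermatSlice_zeros_mul_add_one (hF : 4 < ringChar F) (hd : Fintype.card F / 2 = d) :
    Nat.card {P : ℙ F (Fin 3 → F) // eval P.rep (fermatSlice F d e0 e1 e2) = 0} *
      (Fintype.card F - 1) + 1 = #{t | fermatCharSum e0 e1 e2 t = 0} := by
  have hd0 : d ≠ 0 := by have := Fintype.one_lt_card (α := F); omega
  have hproj : Nat.card {v : Fin 3 → F // v ≠ 0 ∧ eval v (fermatSlice F d e0 e1 e2) = 0} =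
      Nat.card {P : ℙ F (Fin 3 → F) // eval P.rep (fermatSlice F d e0 e1 e2) = 0} *
        Nat.card Fˣ :=
    Projectivization.card_nonzero_mem_eq_card_rep_mem_mul (S := {v | eval v _ = 0}) fun a v => by
      simp [Units.smul_def, eval_smul_fermatSlice, hd0]
  have hzeros : #{v : Fin 3 → F | v ≠ 0 ∧ eval v (fermatSlice F d e0 e1 e2) = 0} =
      #(({v | eval v (fermatSlice F d e0 e1 e2) = 0} : Finset _).erase 0) := by
    congr 1; ext v; simp [and_comm]
  rw [Nat.card_units, Nat.card_eq_fintype_card (α := F), Nat.card_eq_fintype_card,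
    Fintype.card_subtype] at hproj
  rw [← hproj, hzeros, card_erase_add_one (by simp [eval_fermatSlice, zero_pow hd0])]
  exact card_equiv ((Fin.consEquiv fun _ : Fin 3 => F).symm.trans
    ((Equiv.refl F).prodCongr (finTwoArrowEquiv F))) fun x => by
      simpa [Fin.tail] using eval_fermatSlice_eq_zero_iff hF hd x

end FermatSlice

theorem statement18_general (p h : ℕ) (hp : Nat.Prime p) (hp3 : 3 < p)
    (F : Type) [Field F] [Fintype F] (hcard : Fintype.card F = p ^ h)
    (d : ℕ) (hd : p ^ h = 2 * d + 1) (heven : Even d) (e0 e1 e2 : F)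
    (hcase :
      (e0 ^ d = -1 ∧ e1 ^ d = -1 ∧ e2 ^ d = 1) ∨
      (e0 ^ d = -1 ∧ e1 ^ d = 1 ∧ e2 ^ d = -1) ∨
      (e0 ^ d = 1 ∧ e1 ^ d = -1 ∧ e2 ^ d = -1)) :
    (8 * Nat.card {x : Projectivization F (Fin 3 → F) //
        MvPolynomial.eval x.rep (fermatSlice F d e0 e1 e2) = 0} : ℤ) =
      3 * (p ^ h : ℤ) ^ 2 - 6 * (p ^ h : ℤ) + 43 := by
  classical
  have : Fact p.Prime := ⟨hp⟩
  have : CharP F p := charP_of_card_eq_prime_pow hcard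
  have hchar : 4 < ringChar F := by
    have : p ≠ 4 := by rintro rfl; norm_num at hp
    rw [ringChar.eq F p]; omega
  have hd' : Fintype.card F / 2 = d := by omega
  have hone : ∀ {a : F}, a ^ d = 1 → quadraticChar F a = 1 := fun ha =>
    quadraticChar_eq_of_pow_eq (by omega) (by simp) (by rw [hd', ha, Int.cast_one])
  have hneg : ∀ {a : F}, a ^ d = -1 → quadraticChar F a = -1 := fun ha =>
    quadraticChar_eq_of_pow_eq (by omega) (by simp) (by rw [hd', ha, Int.cast_neg, Int.cast_one])
  have hcount := eight_mul_card_fermatCharSum_eq_zero (e0 := e0) (e1 := e1) (e2 := e2) (by omega)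
    (hone heven.neg_one_pow) <| by
      rcases hcase with ⟨h0, h1, h2⟩ | ⟨h0, h1, h2⟩ | ⟨h0, h1, h2⟩
      · exact Or.inl ⟨hneg h0, hneg h1, hone h2⟩
      · exact Or.inr <| Or.inl ⟨hneg h0, hone h1, hneg h2⟩
      · exact Or.inr <| Or.inr ⟨hone h0, hneg h1, hneg h2⟩
  have hq : 1 < p ^ h := hcard ▸ Fintype.one_lt_card
  rw [← card_fermatSlice_zeros_mul_add_one hchar hd', hcard] at hcount
  push_cast [Nat.cast_sub hq.le] at hcount
  refine mul_right_cancel₀ (sub_ne_zero.2 (by exact_mod_cast hq.ne' : (p : ℤ) ^ h ≠ 1)) ?_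
  linear_combination hcount

/-- If `d` is even and exactly two of `η(e0), η(e1), η(e2)` equal `-1`
while the third equals `1`, then the number of points of `ℙ²(F_q)` on the curve `C = 0`
equals `(3q² - 6q + 43)/8` (i.e. `n(n + q - 1)/2 + (2q + 1)` with `n = (q-5)/2`). -/
theorem statement18 (p h : ℕ) (hp : Nat.Prime p) (hp3 : 3 < p) (hh : 0 < h)
    (F : Type) [Field F] [Fintype F] (hcard : Fintype.card F = p ^ h)
    (d : ℕ) (hd : p ^ h = 2 * d + 1) (heven : Even d) (e0 e1 e2 : F)
    (hcase :
      (e0 ^ d = -1 ∧ e1 ^ d = -1 ∧ e2 ^ d = 1) ∨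
      (e0 ^ d = -1 ∧ e1 ^ d = 1 ∧ e2 ^ d = -1) ∨
      (e0 ^ d = 1 ∧ e1 ^ d = -1 ∧ e2 ^ d = -1)) :
    (8 * Nat.card {x : Projectivization F (Fin 3 → F) //
        MvPolynomial.eval x.rep (fermatSlice F d e0 e1 e2) = 0} : ℤ) =
      3 * (p ^ h : ℤ) ^ 2 - 6 * (p ^ h : ℤ) + 43 :=
  statement18_general p h hp hp3 F hcard d hd heven e0 e1 e2 hcase
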